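/- Decay of the solution of the effective friction equation (Remark 2). Let W : ℝ³ → ℝ be a smooth, spherically symmetric Schwartz function with Ŵ(0) ≠ 0 (Fourier convention f̂(k) := ∫e^{−ik·x}f(x)dx), let c > 0, and define F : ℝ³ \ {0} → ℝ³ by F(v) := −c (v/|v|³) ∫₀^{4|v|²} ρ |Ŵ(√ρ)|² dρ, extended by F(0) := 0. Let v : [0,∞) → ℝ³ be differentiable with v̇(t) = F(v(t)) and v(0) ≠ 0. Then the direction of v is constant, v(t) = |v(t)| · v(0)/|v(0)| for all t, |v(t)| is strictly decreasing to 0, and t·|v(t)| → 1/(8c|Ŵ(0)|²) as t → ∞; in particular |v_t| ∼ ⟨t⟩^{−1}, corresponding to the borderline exponent δ = 1/2. -/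

import Mathlib

/- STATEMENT 14: Decay of the solution of the effective friction equation (Remark 2).
Let W be a smooth, spherically symmetric Schwartz function with Ŵ(0) ≠ 0, c > 0, and
  F(v) := −c (v/|v|³) ∫₀^{4|v|²} ρ |Ŵ(√ρ)|² dρ  (F(0) := 0).
If v : [0,∞) → ℝ³ is differentiable with v̇ = F(v) and v(0) ≠ 0, then the direction of
v is constant, |v(t)| strictly decreases to 0, and t·|v(t)| → 1/(8c|Ŵ(0)|²), i.e.
|v_t| ∼ ⟨t⟩⁻¹ (borderline exponent δ = 1/2). -/

open MeasureTheory Filter Topology ENNReal RealInnerProductSpace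

noncomputable section
open scoped Classical

abbrev E3 := EuclideanSpace ℝ (Fin 3)

/-- Fourier transform  f̂(k) = ∫ e^{−ik·x} f(x) dx  of a real-valued function. -/
def ftR (f : E3 → ℝ) (k : E3) : ℂ :=
  ∫ x : E3, Complex.exp (-Complex.I * (⟪k, x⟫ : ℂ)) * (f x : ℂ)

/-- A fixed unit vector, used to evaluate radial Fourier transforms: Ŵ(r) = Ŵ(r e₁). -/
def e₁ : E3 := EuclideanSpace.single (0 : Fin 3) (1:ℝ)

/-- The Cerenkov friction force  F(v) = −c (v/|v|³) ∫₀^{4|v|²} ρ |Ŵ(√ρ)|² dρ,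
extended by F(0) = 0. -/
def Ffric (W : E3 → ℝ) (c : ℝ) (w : E3) : E3 :=
  if w = 0 then 0 else
    (-(c / ‖w‖ ^ 3) * ∫ ρ in (0:ℝ)..(4*‖w‖ ^ 2), ρ * ‖ftR W (Real.sqrt ρ • e₁)‖ ^ 2) • w

lemma ftR_continuous (W : SchwartzMap E3 ℝ) : Continuous (ftR ⇑W) := by
  apply MeasureTheory.continuous_of_dominated (bound := fun x => ‖W x‖)
  · intro k
    apply Continuous.aestronglyMeasurable
    exact (Complex.continuous_exp.comp ((continuous_const.mul
      (Complex.continuous_ofReal.comp (continuous_const.inner continuous_id))))).mul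
      (Complex.continuous_ofReal.comp W.continuous)
  · intro k
    filter_upwards with x
    rw [norm_mul]
    have : ‖Complex.exp (-Complex.I * (⟪k, x⟫ : ℂ))‖ = 1 := by
      rw [Complex.norm_exp]
      simp
    rw [this, one_mul, Complex.norm_real]
  · exact (W.integrable (μ := volume)).norm
  · filter_upwards with x
    exact (Complex.continuous_exp.comp ((continuous_const.mul
      (Complex.continuous_ofReal.comp ((continuous_id.inner continuous_const)))))).mul
      continuous_const

section Gprops
variable {q : ℝ → ℝ}

def Gfun (q : ℝ → ℝ) (r : ℝ) : ℝ := ∫ ρ in (0:ℝ)..(4*r^2), ρ * q ρ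

lemma integrand_intble (hq : Continuous q) (a b : ℝ) :
    IntervalIntegrable (fun ρ => ρ * q ρ) volume a b :=
  (continuous_id.mul hq).intervalIntegrable a b

lemma Gfun_nonneg (hq0 : ∀ ρ, 0 ≤ q ρ) (r : ℝ) : 0 ≤ Gfun q r := by
  apply intervalIntegral.integral_nonneg (by positivity)
  intro ρ hρ
  exact mul_nonneg hρ.1 (hq0 ρ)

lemma Gfun_mono (hq : Continuous q) (hq0 : ∀ ρ, 0 ≤ q ρ) {r s : ℝ}
    (hr : 0 ≤ r) (hrs : r ≤ s) : Gfun q r ≤ Gfun q s := by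
  have h1 : 4*r^2 ≤ 4*s^2 := by nlinarith
  have h0 : (0:ℝ) ≤ 4*r^2 := by positivity
  have hadd := intervalIntegral.integral_add_adjacent_intervals
    (integrand_intble hq 0 (4*r^2)) (integrand_intble hq (4*r^2) (4*s^2))
  have h2 : 0 ≤ ∫ ρ in (4*r^2)..(4*s^2), ρ * q ρ := by
    apply intervalIntegral.integral_nonneg h1
    intro ρ hρ
    exact mul_nonneg (le_trans h0 hρ.1) (hq0 ρ)
  unfold Gfun
  rw [← hadd]
  linarith

lemma Gfun_le (hq : Continuous q) {M R r : ℝ} (hM : ∀ ρ ∈ Set.Icc 0 (4*R^2), q ρ ≤ M)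
    (hr : 0 ≤ r) (hrR : r ≤ R) : Gfun q r ≤ 8 * M * r^4 := by
  have h0 : (0:ℝ) ≤ 4*r^2 := by positivity
  have hsub : Set.Icc (0:ℝ) (4*r^2) ⊆ Set.Icc 0 (4*R^2) := by
    apply Set.Icc_subset_Icc le_rfl; nlinarith
  have h1 : Gfun q r ≤ ∫ ρ in (0:ℝ)..(4*r^2), M * ρ := by
    apply intervalIntegral.integral_mono_on h0 (integrand_intble hq 0 _)
      ((continuous_const.mul continuous_id).intervalIntegrable _ _)
    intro ρ hρ
    calc ρ * q ρ ≤ ρ * M := mul_le_mul_of_nonneg_left (hM ρ (hsub hρ)) hρ.1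
    _ = M * ρ := mul_comm _ _
  have h2 : (∫ ρ in (0:ℝ)..(4*r^2), M * ρ) = 8 * M * r^4 := by
    rw [intervalIntegral.integral_const_mul]
    simp only [integral_id]
    ring
  linarith

lemma Gfun_pos (hq : Continuous q) (hq0 : ∀ ρ, 0 ≤ q ρ) (hqq : 0 < q 0)
    {r : ℝ} (hr : 0 < r) : 0 < Gfun q r := by
  have hev : ∀ᶠ ρ in 𝓝 (0:ℝ), q 0 / 2 < q ρ := by
    have := (hq.continuousAt (x := (0:ℝ))).eventually
      (Metric.ball_mem_nhds (q 0) (show 0 < q 0 / 2 by linarith))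
    filter_upwards [this] with y hy
    rw [Real.dist_eq, abs_lt] at hy
    linarith [hy.1]
  obtain ⟨ε, hε, hball⟩ := Metric.eventually_nhds_iff.1 hev
  set s : ℝ := min (ε/2) (4*r^2) with hs
  have hs0 : 0 < s := lt_min (by linarith) (by positivity)
  have hsr : s ≤ 4*r^2 := min_le_right _ _
  have hlow : (q 0 / 2) * (s^2/2) ≤ ∫ ρ in (0:ℝ)..s, ρ * q ρ := by
    have : (∫ ρ in (0:ℝ)..s, (q 0 / 2) * ρ) ≤ ∫ ρ in (0:ℝ)..s, ρ * q ρ := by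
      apply intervalIntegral.integral_mono_on hs0.le
        ((continuous_const.mul continuous_id).intervalIntegrable _ _)
        (integrand_intble hq 0 _)
      intro ρ hρ
      have hlt : q 0 / 2 ≤ q ρ := by
        by_cases h : ρ = 0
        · subst h; linarith
        · have : dist ρ 0 < ε := by
            rw [Real.dist_eq, sub_zero, abs_of_nonneg hρ.1]
            calc ρ ≤ s := hρ.2
            _ ≤ ε/2 := min_le_left _ _
            _ < ε := by linarith
          exact (hball this).le
      calc (q 0 / 2) * ρ ≤ q ρ * ρ := mul_le_mul_of_nonneg_right hlt hρ.1
      _ = ρ * q ρ := mul_comm _ _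
    rw [intervalIntegral.integral_const_mul] at this
    simp only [integral_id] at this
    linarith
  have hsplit := intervalIntegral.integral_add_adjacent_intervals
    (integrand_intble hq 0 s) (integrand_intble hq s (4*r^2))
  have h2 : 0 ≤ ∫ ρ in s..(4*r^2), ρ * q ρ := by
    apply intervalIntegral.integral_nonneg hsr
    intro ρ hρ
    exact mul_nonneg (le_trans hs0.le hρ.1) (hq0 ρ)
  have : 0 < (q 0 / 2) * (s^2/2) := by positivity
  unfold Gfun
  rw [← hsplit]
  linarith

lemma Gfun_lim (hq : Continuous q) (hq0 : ∀ ρ, 0 ≤ q ρ) :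
    Tendsto (fun r => Gfun q r / r^4) (𝓝[>] 0) (𝓝 (8 * q 0)) := by
  rw [Metric.tendsto_nhdsWithin_nhds]
  intro ε hε
  have hev : ∀ᶠ ρ in 𝓝 (0:ℝ), |q ρ - q 0| < ε/17 :=
    (hq.continuousAt (x := (0:ℝ))).eventually (by
      have : Metric.ball (q 0) (ε/17) ∈ 𝓝 (q 0) := Metric.ball_mem_nhds _ (by linarith)
      filter_upwards [this] with y hy
      rw [Metric.mem_ball, Real.dist_eq] at hy; exact hy)
  obtain ⟨εb, hεb, hball⟩ := Metric.eventually_nhds_iff.1 hev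
  refine ⟨Real.sqrt (εb/8), Real.sqrt_pos.2 (by linarith), ?_⟩
  intro r hrmem hrd
  have hr : 0 < r := hrmem
  rw [Real.dist_eq, sub_zero, abs_of_pos hr] at hrd
  have hr2 : 4*r^2 < εb := by
    have := Real.sq_sqrt (by linarith : (0:ℝ) ≤ εb/8)
    nlinarith [Real.sqrt_nonneg (εb/8)]
  -- bound |q ρ - q 0| ≤ ε/17 on [0, 4r²]
  have hbd : ∀ ρ ∈ Set.Icc (0:ℝ) (4*r^2), |q ρ - q 0| ≤ ε/17 := by
    intro ρ hρ
    apply le_of_lt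
    apply hball
    rw [Real.dist_eq, sub_zero, abs_of_nonneg hρ.1]
    linarith [hρ.2]
  have h0 : (0:ℝ) ≤ 4*r^2 := by positivity
  -- |G r - 8 q0 r⁴| ≤ (ε/17) * 8 r⁴
  have hup : Gfun q r ≤ 8 * (q 0 + ε/17) * r^4 := by
    apply Gfun_le hq (R := r) _ hr.le le_rfl
    intro ρ hρ
    have := hbd ρ hρ
    have := abs_le.1 this
    linarith [this.2]
  have hdown : 8 * (q 0 - ε/17) * r^4 ≤ Gfun q r := by
    have h1 : (∫ ρ in (0:ℝ)..(4*r^2), (q 0 - ε/17) * ρ) ≤ Gfun q r := by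
      apply intervalIntegral.integral_mono_on h0
        ((continuous_const.mul continuous_id).intervalIntegrable _ _)
        (integrand_intble hq 0 _)
      intro ρ hρ
      have := (abs_le.1 (hbd ρ hρ)).1
      calc (q 0 - ε/17) * ρ ≤ q ρ * ρ := mul_le_mul_of_nonneg_right (by linarith) hρ.1
      _ = ρ * q ρ := mul_comm _ _
    rw [intervalIntegral.integral_const_mul] at h1
    simp only [integral_id] at h1
    nlinarith [h1]
  rw [Real.dist_eq]
  have hr4 : (0:ℝ) < r^4 := by positivity
  have hA : Gfun q r / r^4 ≤ 8*(q 0 + ε/17) := by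
    rw [div_le_iff₀ hr4]; nlinarith [hup]
  have hB : 8*(q 0 - ε/17) ≤ Gfun q r / r^4 := by
    rw [le_div_iff₀ hr4]; nlinarith [hdown]
  rw [abs_lt]
  constructor <;> linarith

end Gprops

def qW (W : E3 → ℝ) (ρ : ℝ) : ℝ := ‖ftR W (Real.sqrt ρ • e₁)‖^2

lemma qW_continuous (W : SchwartzMap E3 ℝ) : Continuous (qW ⇑W) :=
  (((ftR_continuous W).comp (Real.continuous_sqrt.smul continuous_const)).norm).pow 2

lemma qW_nonneg (W : E3 → ℝ) (ρ : ℝ) : 0 ≤ qW W ρ := pow_nonneg (norm_nonneg _) 2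

lemma qW_zero (W : E3 → ℝ) : qW W 0 = ‖ftR W 0‖^2 := by
  simp [qW]

lemma Ffric_eq (W : E3 → ℝ) (c : ℝ) {w : E3} (hw : w ≠ 0) :
    Ffric W c w = (-(c / ‖w‖^3) * Gfun (qW W) ‖w‖) • w := by
  rw [Ffric, if_neg hw]; rfl

lemma Ffric_zero (W : E3 → ℝ) (c : ℝ) : Ffric W c 0 = 0 := by rw [Ffric, if_pos rfl]

set_option maxHeartbeats 1000000 in
theorem effective_friction_equation_decay
    (W : SchwartzMap E3 ℝ)
    (hWrad : ∀ x y : E3, ‖x‖ = ‖y‖ → W x = W y)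
    (hW0 : ftR (⇑W) 0 ≠ 0)
    (c : ℝ) (hc : 0 < c)
    (v : ℝ → E3)
    (hode : ∀ t ∈ Set.Ici (0:ℝ), HasDerivWithinAt v (Ffric (⇑W) c (v t)) (Set.Ici 0) t)
    (hv0 : v 0 ≠ 0) :
    -- the direction of v is constant:  v(t) = |v(t)| · v(0)/|v(0)|
    (∀ t ∈ Set.Ici (0:ℝ), v t = (‖v t‖ / ‖v 0‖) • v 0) ∧
    -- |v(t)| is strictly decreasing to 0
    StrictAntiOn (fun t : ℝ => ‖v t‖) (Set.Ici 0) ∧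
    Tendsto (fun t : ℝ => ‖v t‖) atTop (𝓝 0) ∧
    -- and t·|v(t)| → 1/(8c|Ŵ(0)|²), i.e. |v_t| ∼ ⟨t⟩⁻¹
    Tendsto (fun t : ℝ => t * ‖v t‖) atTop (𝓝 (1 / (8 * c * ‖ftR (⇑W) 0‖ ^ 2))) := by
  set q : ℝ → ℝ := qW ⇑W with hq_def
  have hqc : Continuous q := qW_continuous W
  have hq0 : ∀ ρ, 0 ≤ q ρ := qW_nonneg ⇑W
  have hq00 : q 0 = ‖ftR (⇑W) 0‖^2 := qW_zero ⇑W
  have hqpos : 0 < q 0 := by rw [hq00]; exact pow_pos (norm_pos_iff.2 hW0) 2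
  set n0 : ℝ := ‖v 0‖ with hn0_def
  have hn0 : 0 < n0 := norm_pos_iff.2 hv0
  -- bound M on q over the relevant compact interval
  obtain ⟨M, hM⟩ := (isCompact_Icc (a := (0:ℝ)) (b := 4*n0^2)).exists_bound_of_continuousOn
    hqc.continuousOn
  have hMq : ∀ ρ ∈ Set.Icc (0:ℝ) (4*n0^2), q ρ ≤ M := by
    intro ρ hρ
    calc q ρ ≤ |q ρ| := le_abs_self _
    _ = ‖q ρ‖ := rfl
    _ ≤ M := hM ρ hρ
  have hMpos : 0 < M := lt_of_lt_of_le hqpos (hMq 0 ⟨le_rfl, by positivity⟩)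
  set K : ℝ := 8*c*M*n0 with hK_def
  -- continuity of v on Ici 0
  have hvc : ContinuousOn v (Set.Ici 0) := fun t ht => (hode t ht).continuousWithinAt
  -- derivative of ‖v‖²
  have hr2d : ∀ t ∈ Set.Ici (0:ℝ), HasDerivWithinAt (fun t => ‖v t‖^2)
      (2 * ⟪v t, Ffric (⇑W) c (v t)⟫) (Set.Ici 0) t := by
    intro t ht
    have h := HasDerivWithinAt.inner ℝ (hode t ht) (hode t ht)
    have e1 : (fun t => ‖v t‖^2) = (fun t : ℝ => (⟪v t, v t⟫ : ℝ)) :=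
      funext fun s => (real_inner_self_eq_norm_sq _).symm
    rw [e1]
    have e2 : 2 * ⟪v t, Ffric (⇑W) c (v t)⟫
        = ⟪v t, Ffric (⇑W) c (v t)⟫ + ⟪Ffric (⇑W) c (v t), v t⟫ := by
      rw [real_inner_comm (Ffric (⇑W) c (v t)) (v t)]
      ring
    rw [e2]
    exact h
  have hinner : ∀ t, ⟪v t, Ffric (⇑W) c (v t)⟫ ≤ (0:ℝ) := by
    intro t
    by_cases h : v t = 0
    · simp [h, Ffric_zero]
    · rw [Ffric_eq ⇑W c h, ← hq_def, real_inner_smul_right, real_inner_self_eq_norm_sq]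
      have hG := Gfun_nonneg hq0 ‖v t‖
      have hn := norm_pos_iff.2 h
      have hcn : 0 ≤ c / ‖v t‖^3 := by positivity
      nlinarith [mul_nonneg (mul_nonneg hcn hG) (pow_nonneg (norm_nonneg (v t)) 2)]
  -- ‖v‖² antitone
  have hr2anti : AntitoneOn (fun t => ‖v t‖^2) (Set.Ici 0) := by
    apply antitoneOn_of_deriv_nonpos (convex_Ici 0) ((hvc.norm).pow 2)
    · intro t ht
      rw [interior_Ici] at ht
      exact ((hr2d t (le_of_lt (Set.mem_Ioi.1 ht))).hasDerivAt
        (Ici_mem_nhds (Set.mem_Ioi.1 ht))).differentiableAt.differentiableWithinAt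
    · intro t ht
      rw [interior_Ici] at ht
      show deriv (fun t => ‖v t‖^2) t ≤ 0
      rw [((hr2d t (le_of_lt (Set.mem_Ioi.1 ht))).hasDerivAt (Ici_mem_nhds (Set.mem_Ioi.1 ht))).deriv]
      linarith [hinner t]
  have hle : ∀ t ∈ Set.Ici (0:ℝ), ‖v t‖ ≤ n0 := by
    intro t ht
    have h2 : ‖v t‖^2 ≤ n0^2 := hr2anti (Set.self_mem_Ici) ht ht
    nlinarith [norm_nonneg (v t), hn0]
  -- force bound
  have hFb : ∀ w : E3, ‖w‖ ≤ n0 → ‖Ffric (⇑W) c w‖ ≤ K * ‖w‖ := by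
    intro w hw
    by_cases h : w = 0
    · simp [h, Ffric_zero, hK_def]
    · have hn : 0 < ‖w‖ := norm_pos_iff.2 h
      have h8 : Gfun q ‖w‖ ≤ 8*M*‖w‖^4 := Gfun_le hqc hMq (norm_nonneg w) hw
      have hGnn : 0 ≤ Gfun q ‖w‖ := Gfun_nonneg hq0 _
      rw [Ffric_eq ⇑W c h, ← hq_def, norm_smul, Real.norm_eq_abs]
      have habs : |(-(c / ‖w‖^3) * Gfun q ‖w‖)| = (c / ‖w‖^3) * Gfun q ‖w‖ := by
        rw [neg_mul, abs_neg, abs_of_nonneg (by positivity)]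
      rw [habs, div_mul_eq_mul_div, div_mul_eq_mul_div, div_le_iff₀ (by positivity)]
      have e2 : c * Gfun q ‖w‖ ≤ c * (8*M*‖w‖^4) :=
        mul_le_mul_of_nonneg_left h8 hc.le
      have e3 : c * (8*M*‖w‖^4) * ‖w‖ ≤ K * ‖w‖ * ‖w‖^3 := by
        rw [hK_def]
        have key : 0 ≤ (c*M*‖w‖^4) * (n0 - ‖w‖) :=
          mul_nonneg (by positivity) (sub_nonneg.2 hw)
        nlinarith [key]
      calc c * Gfun q ‖w‖ * ‖w‖ ≤ c * (8*M*‖w‖^4) * ‖w‖ :=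
            mul_le_mul_of_nonneg_right e2 hn.le
      _ ≤ K * ‖w‖ * ‖w‖^3 := e3
  -- non-vanishing
  have hpos : ∀ t ∈ Set.Ici (0:ℝ), 0 < ‖v t‖ := by
    intro t ht
    rcases eq_or_lt_of_le (Set.mem_Ici.1 ht) with rfl | h0
    · exact norm_pos_iff.2 hv0
    rw [norm_pos_iff]
    intro hvt0
    set g : ℝ → E3 := fun s => v (t - s) with hg
    have hmaps : Set.MapsTo (fun s : ℝ => t - s) (Set.Icc 0 t) (Set.Ici 0) := by
      intro s hs
      simp only [Set.mem_Ici]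
      linarith [hs.2]
    have hgc : ContinuousOn g (Set.Icc 0 t) :=
      hvc.comp ((continuous_const.sub continuous_id).continuousOn) hmaps
    have hgd : ∀ s ∈ Set.Ico 0 t, HasDerivAt g (-Ffric (⇑W) c (g s)) s := by
      intro s hs
      have hu : 0 < t - s := by linarith [hs.2]
      have hv' : HasDerivAt v (Ffric (⇑W) c (v (t-s))) (t-s) :=
        (hode (t-s) (le_of_lt hu)).hasDerivAt (Ici_mem_nhds hu)
      have hin : HasDerivAt (fun s : ℝ => t - s) (-1) s := by
        simpa using (hasDerivAt_id s).const_sub t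
      have hcomp := HasDerivAt.scomp s hv' hin
      exact hcomp.congr_deriv (neg_one_smul ℝ _)
    have hbd : ∀ s ∈ Set.Ico 0 t, ‖-Ffric (⇑W) c (g s)‖ ≤ K * ‖g s‖ + 0 := by
      intro s hs
      rw [norm_neg, add_zero]
      exact hFb _ (hle (t - s) (by simp only [Set.mem_Ici]; linarith [hs.2]))
    have hgr := norm_le_gronwallBound_of_norm_deriv_right_le hgc
      (fun s hs => (hgd s hs).hasDerivWithinAt) (δ := 0)
      (by simp [hg, hvt0]) hbd t (Set.right_mem_Icc.2 h0.le)
    rw [gronwallBound_ε0] at hgr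
    simp only [hg, sub_self, zero_mul] at hgr
    exact hv0 (norm_le_zero_iff.1 (by linarith [hgr]))
  have hne : ∀ t ∈ Set.Ici (0:ℝ), v t ≠ 0 := fun t ht => norm_pos_iff.1 (hpos t ht)
  -- the scalar coefficient
  set lam : ℝ → ℝ := fun t => -(c / ‖v t‖^3) * Gfun q ‖v t‖ with hlam_def
  have hFlam : ∀ t ∈ Set.Ici (0:ℝ), Ffric (⇑W) c (v t) = lam t • v t := by
    intro t ht
    exact Ffric_eq ⇑W c (hne t ht)
  have hlam_neg : ∀ t ∈ Set.Ici (0:ℝ), lam t < 0 := by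
    intro t ht
    have h1 := hpos t ht
    have h2 := Gfun_pos hqc hq0 hqpos h1
    have : 0 < c / ‖v t‖^3 := by positivity
    simp only [hlam_def]
    nlinarith
  have hlam_bd : ∀ t ∈ Set.Ici (0:ℝ), |lam t| ≤ K := by
    intro t ht
    have h1 := hFb (v t) (hle t ht)
    rw [hFlam t ht, norm_smul, Real.norm_eq_abs] at h1
    exact le_of_mul_le_mul_right h1 (hpos t ht)
  -- derivative of the norm
  have hnd : ∀ t ∈ Set.Ici (0:ℝ), HasDerivWithinAt (fun t => ‖v t‖)
      (lam t * ‖v t‖) (Set.Ici 0) t := by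
    intro t ht
    have h2 := hr2d t ht
    rw [hFlam t ht, real_inner_smul_right, real_inner_self_eq_norm_sq] at h2
    have hsq : HasDerivAt Real.sqrt (1/(2*Real.sqrt (‖v t‖^2))) (‖v t‖^2) :=
      Real.hasDerivAt_sqrt (pow_pos (hpos t ht) 2).ne'
    have hcomp := HasDerivAt.comp_hasDerivWithinAt t hsq h2
    simp only [Function.comp_def] at hcomp
    have hcg := hcomp.congr (fun s _ => (Real.sqrt_sq (norm_nonneg (v s))).symm)
      (Real.sqrt_sq (norm_nonneg (v t))).symm
    have hval : (1/(2*Real.sqrt (‖v t‖^2))) * (2 * (lam t * ‖v t‖^2)) = lam t * ‖v t‖ := by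
      rw [Real.sqrt_sq (norm_nonneg _)]
      have hnne : ‖v t‖ ≠ 0 := (hpos t ht).ne'
      generalize lam t = A
      field_simp
    rw [hval] at hcg
    exact hcg
  -- (a) direction constancy
  have hdir : ∀ t ∈ Set.Ici (0:ℝ), v t = (‖v t‖ / ‖v 0‖) • v 0 := by
    intro t ht
    set u : ℝ → E3 := fun s => ‖v 0‖ • v s - ‖v s‖ • v 0 with hu
    have hud : ∀ s ∈ Set.Ici (0:ℝ), HasDerivWithinAt u (lam s • u s) (Set.Ici 0) s := by
      intro s hs
      have h1 : HasDerivWithinAt (fun s => ‖v 0‖ • v s) (‖v 0‖ • (lam s • v s))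
          (Set.Ici 0) s := by
        have h := hode s hs
        rw [hFlam s hs] at h
        exact HasDerivWithinAt.const_smul (‖v 0‖) h
      have h2 : HasDerivWithinAt (fun s => ‖v s‖ • v 0) ((lam s * ‖v s‖) • v 0)
          (Set.Ici 0) s := (hnd s hs).smul_const (v 0)
      have h3 := h1.sub h2
      have e : lam s • u s = ‖v 0‖ • (lam s • v s) - (lam s * ‖v s‖) • v 0 := by
        simp only [hu]
        module
      rw [e]
      exact h3
    have hcu : ContinuousOn u (Set.Icc 0 t) := by
      have hv' : ContinuousOn v (Set.Icc 0 t) := hvc.mono (Set.Icc_subset_Ici_self)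
      show ContinuousOn (fun s => ‖v 0‖ • v s - ‖v s‖ • v 0) (Set.Icc 0 t)
      fun_prop
    have hbd : ∀ s ∈ Set.Ico 0 t, ‖lam s • u s‖ ≤ K * ‖u s‖ + 0 := by
      intro s hs
      rw [norm_smul, Real.norm_eq_abs, add_zero]
      exact mul_le_mul_of_nonneg_right (hlam_bd s hs.1) (norm_nonneg _)
    have h00 : ‖u 0‖ ≤ 0 := by simp [hu]
    have hgr := norm_le_gronwallBound_of_norm_deriv_right_le hcu
      (fun s hs => (hud s hs.1).mono (Set.Ici_subset_Ici.2 hs.1)) h00 hbd t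
      (Set.right_mem_Icc.2 ht)
    rw [gronwallBound_ε0] at hgr
    have hut : u t = 0 := by
      have : ‖u t‖ ≤ 0 := by simpa using hgr
      exact norm_le_zero_iff.1 this
    have hueq : ‖v 0‖ • v t = ‖v t‖ • v 0 := by
      have := sub_eq_zero.1 hut
      simpa [hu] using this
    have h5 := congrArg (fun w => (‖v 0‖ : ℝ)⁻¹ • w) hueq
    simp only [inv_smul_smul₀ (norm_pos_iff.2 hv0).ne'] at h5
    rw [div_eq_inv_mul, ← smul_smul]
    exact h5
  -- (b) strict antitonicity
  have hstrict : StrictAntiOn (fun t : ℝ => ‖v t‖) (Set.Ici 0) := by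
    apply strictAntiOn_of_deriv_neg (convex_Ici 0) (hvc.norm)
    intro t ht
    rw [interior_Ici] at ht
    rw [((hnd t (le_of_lt (Set.mem_Ioi.1 ht))).hasDerivAt (Ici_mem_nhds (Set.mem_Ioi.1 ht))).deriv]
    exact mul_neg_of_neg_of_pos (hlam_neg t (le_of_lt (Set.mem_Ioi.1 ht))) (hpos t (le_of_lt (Set.mem_Ioi.1 ht)))
  -- (c) tendsto 0
  have hanti : AntitoneOn (fun t : ℝ => ‖v t‖) (Set.Ici 0) := by
    intro s hs t ht hst
    have h := hr2anti hs ht hst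
    simp only at h ⊢
    nlinarith [norm_nonneg (v t), norm_nonneg (v s)]
  have htend0 : Tendsto (fun t : ℝ => ‖v t‖) atTop (𝓝 0) := by
    set n1 : ℝ → ℝ := fun t => ‖v (max t 0)‖ with hn1
    have hn1anti : Antitone n1 := by
      intro s t hst
      exact hanti (Set.mem_Ici.2 (le_max_right s 0)) (Set.mem_Ici.2 (le_max_right t 0))
        (max_le_max hst le_rfl)
    have hbdd : BddBelow (Set.range n1) := ⟨0, by rintro x ⟨t, rfl⟩; exact norm_nonneg _⟩
    have hlim := tendsto_atTop_ciInf hn1anti hbdd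
    set l : ℝ := ⨅ t, n1 t with hl
    have hl0 : 0 ≤ l := le_ciInf fun t => norm_nonneg _
    have hlle : ∀ t : ℝ, l ≤ n1 t := fun t => ciInf_le hbdd t
    have hlle' : ∀ t ∈ Set.Ici (0:ℝ), l ≤ ‖v t‖ := by
      intro t ht
      have h6 := hlle t
      have e : max t 0 = t := max_eq_left ht
      calc l ≤ n1 t := h6
      _ = ‖v t‖ := by rw [hn1]; show ‖v (max t 0)‖ = ‖v t‖; rw [e]
    have hleq : l = 0 := by
      by_contra hne0
      have hlpos : 0 < l := lt_of_le_of_ne hl0 (Ne.symm hne0)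
      have hGl : 0 < Gfun q l := Gfun_pos hqc hq0 hqpos hlpos
      set δ : ℝ := c * Gfun q l / n0^2 with hδ
      have hδpos : 0 < δ := by positivity
      have hdb : ∀ t ∈ Set.Ici (0:ℝ), lam t * ‖v t‖ ≤ -δ := by
        intro t ht
        have hnt := hpos t ht
        have hlt : l ≤ ‖v t‖ := hlle' t ht
        have hG2 : Gfun q l ≤ Gfun q ‖v t‖ := Gfun_mono hqc hq0 hl0 hlt
        have e : lam t * ‖v t‖ = -(c * Gfun q ‖v t‖ / ‖v t‖^2) := by
          simp only [hlam_def]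
          field_simp
        rw [e, hδ, neg_le_neg_iff]
        apply div_le_div₀ (mul_nonneg hc.le (Gfun_nonneg hq0 _))
          (mul_le_mul_of_nonneg_left hG2 hc.le) (pow_pos hnt 2)
        have := hle t ht
        nlinarith [norm_nonneg (v t)]
      have hh : AntitoneOn (fun t => ‖v t‖ + δ * t) (Set.Ici 0) := by
        apply antitoneOn_of_deriv_nonpos (convex_Ici 0)
          ((hvc.norm).add (continuousOn_const.mul continuousOn_id))
        · intro t ht
          rw [interior_Ici] at ht
          have hd : HasDerivAt (fun t => ‖v t‖ + δ * t) (lam t * ‖v t‖ + δ) t :=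
            ((hnd t (le_of_lt (Set.mem_Ioi.1 ht))).hasDerivAt (Ici_mem_nhds (Set.mem_Ioi.1 ht))).add
              (by simpa using (hasDerivAt_id t).const_mul δ)
          exact hd.differentiableAt.differentiableWithinAt
        · intro t ht
          rw [interior_Ici] at ht
          have hd : HasDerivAt (fun t => ‖v t‖ + δ * t) (lam t * ‖v t‖ + δ) t :=
            ((hnd t (le_of_lt (Set.mem_Ioi.1 ht))).hasDerivAt (Ici_mem_nhds (Set.mem_Ioi.1 ht))).add
              (by simpa using (hasDerivAt_id t).const_mul δ)
          show deriv (fun t => ‖v t‖ + δ * t) t ≤ 0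
          rw [hd.deriv]
          linarith [hdb t (le_of_lt (Set.mem_Ioi.1 ht))]
      set T : ℝ := (n0 - l)/δ + 1 with hT
      have hln0 : l ≤ n0 := hlle' 0 Set.self_mem_Ici
      have hTpos : 0 ≤ T := by
        rw [hT]
        have : 0 ≤ (n0 - l)/δ := div_nonneg (by linarith) hδpos.le
        linarith
      have hco := hh Set.self_mem_Ici (Set.mem_Ici.2 hTpos) hTpos
      simp only at hco
      have hlT := hlle' T (Set.mem_Ici.2 hTpos)
      have hdT : δ * T = n0 - l + δ := by
        rw [hT]
        field_simp
      rw [hdT] at hco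
      simp only [mul_zero, add_zero] at hco
      linarith
    rw [hleq] at hlim
    apply hlim.congr'
    filter_upwards [eventually_ge_atTop (0:ℝ)] with t ht
    show ‖v (max t 0)‖ = ‖v t‖
    rw [max_eq_left ht]
  -- (d) asymptotics
  have hasymp : Tendsto (fun t : ℝ => t * ‖v t‖) atTop (𝓝 (1 / (8 * c * ‖ftR (⇑W) 0‖ ^ 2))) := by
    set mf : ℝ → ℝ := fun t => ‖v t‖⁻¹ with hmf
    set ψ : ℝ → ℝ := fun t => -(lam t * ‖v t‖) / ‖v t‖^2 with hψ
    have hmd : ∀ t ∈ Set.Ici (0:ℝ), HasDerivWithinAt mf (ψ t) (Set.Ici 0) t := by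
      intro t ht
      exact (hnd t ht).inv (hpos t ht).ne'
    set L : ℝ := 8 * c * q 0 with hLdef
    have hL : 0 < L := by
      rw [hLdef]
      positivity
    -- ψ → L at infinity
    have hnv_mem : Tendsto (fun t : ℝ => ‖v t‖) atTop (𝓝[>] 0) := by
      rw [tendsto_nhdsWithin_iff]
      refine ⟨htend0, ?_⟩
      filter_upwards [eventually_ge_atTop (0:ℝ)] with t ht
      exact hpos t ht
    have hcomp : Tendsto (fun t : ℝ => Gfun q ‖v t‖ / ‖v t‖^4) atTop (𝓝 (8 * q 0)) :=
      (Gfun_lim hqc hq0).comp hnv_mem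
    have hψlim : Tendsto ψ atTop (𝓝 L) := by
      have h1 : Tendsto (fun t : ℝ => c * (Gfun q ‖v t‖ / ‖v t‖^4)) atTop (𝓝 (c * (8 * q 0))) :=
        tendsto_const_nhds.mul hcomp
      have h2 : L = c * (8 * q 0) := by rw [hLdef]; ring
      rw [h2]
      apply h1.congr'
      filter_upwards [eventually_ge_atTop (0:ℝ)] with t ht
      have hnt : 0 < ‖v t‖ := hpos t ht
      rw [hψ]
      simp only [hlam_def]
      field_simp
    -- m t / t → L
    have hml : Tendsto (fun t : ℝ => mf t / t) atTop (𝓝 L) := by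
      rw [Metric.tendsto_atTop]
      intro ε hε
      obtain ⟨T0, hT0⟩ := Metric.tendsto_atTop.1 hψlim (ε/2) (by linarith)
      set T : ℝ := max T0 0 with hTdef
      have hT0' : ∀ x ∈ Set.Ici T, ‖ψ x - L‖ ≤ ε/2 := by
        intro x hx
        have := hT0 x (le_trans (le_max_left T0 0) hx)
        rw [Real.dist_eq] at this
        rw [Real.norm_eq_abs]
        linarith
      have hder : ∀ x ∈ Set.Ici T, HasDerivWithinAt (fun t => mf t - L * t)
          (ψ x - L) (Set.Ici T) x := by
        intro x hx
        have hx0 : (0:ℝ) ≤ x := le_trans (le_max_right T0 0) hx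
        have h1 := (hmd x hx0).mono (Set.Ici_subset_Ici.2 (le_max_right T0 0))
        have h2 : HasDerivWithinAt (fun t : ℝ => L * t) L (Set.Ici T) x := by
          simpa using ((hasDerivAt_id x).const_mul L).hasDerivWithinAt
        exact h1.sub h2
      have hkey : ∀ t ∈ Set.Ici T, |(mf t - L*t) - (mf T - L*T)| ≤ ε/2 * (t - T) := by
        intro t htt
        have h3 := Convex.norm_image_sub_le_of_norm_hasDerivWithin_le hder hT0'
          (convex_Ici T) Set.self_mem_Ici htt
        rw [Real.norm_eq_abs, Real.norm_eq_abs, abs_of_nonneg (sub_nonneg.2 (Set.mem_Ici.1 htt))] at h3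
        exact h3
      set B : ℝ := |mf T - L*T| with hB
      have hBnn : 0 ≤ B := abs_nonneg _
      refine ⟨max (T+1) (2*B/ε + 1), ?_⟩
      intro t htN
      have ht1 : T + 1 ≤ t := le_trans (le_max_left _ _) htN
      have ht2 : 2*B/ε + 1 ≤ t := le_trans (le_max_right _ _) htN
      have htT : T ≤ t := by linarith
      have htpos : 0 < t := by
        have : (0:ℝ) ≤ T := le_max_right T0 0
        linarith
      have hk := hkey t (Set.mem_Ici.2 htT)
      have hup : |mf t - L*t| ≤ B + ε/2 * (t - T) := by
        have h4 := abs_le.1 hk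
        have h6 := le_abs_self (mf T - L*T)
        have h7 := neg_abs_le (mf T - L*T)
        rw [hB, abs_le]
        constructor <;> linarith [h4.1, h4.2]
      rw [Real.dist_eq]
      have e1 : mf t / t - L = (mf t - L*t)/t := by
        field_simp
      rw [e1, abs_div, abs_of_pos htpos, div_lt_iff₀ htpos]
      have hTnn : (0:ℝ) ≤ T := le_max_right T0 0
      have hBlt : B < ε/2 * t := by
        have h5 : 2*B/ε < t := by linarith
        rw [div_lt_iff₀ (by linarith : (0:ℝ) < ε)] at h5
        nlinarith
      nlinarith [hup]
    -- conclude
    have hinv := hml.inv₀ (ne_of_gt hL)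
    have heq : (fun t : ℝ => (mf t / t)⁻¹) =ᶠ[atTop] (fun t : ℝ => t * ‖v t‖) := by
      filter_upwards [eventually_gt_atTop (0:ℝ)] with t ht
      have hnt : 0 < ‖v t‖ := hpos t ht.le
      rw [inv_div, hmf]
      show t / (‖v t‖⁻¹) = t * ‖v t‖
      rw [div_eq_mul_inv, inv_inv]
    have hfinal := hinv.congr' heq
    have hval : L⁻¹ = 1 / (8 * c * ‖ftR (⇑W) 0‖ ^ 2) := by
      rw [one_div, hLdef, hq00]
    rw [hval] at hfinal
    exact hfinal
  exact ⟨hdir, hstrict, htend0, hasymp⟩
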